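/- arXiv:2009.01567 — 3 statements merged into one kernel-verified Lean document; each statement's English description precedes it below -/
import Mathlib

section
/- Let R be an m×n 0-1 matrix and Σ the set system on [n] with sets L_ℓ = {v : R_{ℓ,v}=1}, ℓ∈[m]. If disc(Σ) ≤ 1, then a vector x*∈{−1,+1}ⁿ minimizes ‖Rx‖² over x∈{−1,+1}ⁿ if and only if x* minimizes disc(Σ,x) = ‖Rx‖_∞ over x∈{−1,+1}ⁿ. -/
open Finset

private lemma zkey1 (ka kb : ℤ) (h2 : 2 ∣ ka - kb) (hb : kb = 0 ∨ kb = 1 ∨ kb = -1) :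
    kb ^ 2 ≤ ka ^ 2 := by
  obtain ⟨t, ht⟩ := h2
  rcases eq_or_ne ka 0 with h | h
  · subst h
    rcases hb with hb | hb | hb <;> subst hb
    · simp
    · exfalso; omega
    · exfalso; omega
  · have h1 := Int.one_le_abs h
    rcases hb with hb | hb | hb <;> subst hb <;>
      nlinarith [sq_abs ka, abs_nonneg ka]

private lemma zkey3 (ka kb : ℤ) (h2 : 2 ∣ ka - kb) (hb : kb = 0 ∨ kb = 1 ∨ kb = -1)
    (hb0 : kb ≠ 0) : 1 ≤ |ka| := by
  obtain ⟨t, ht⟩ := h2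
  have : ka ≠ 0 := by rcases hb with hb | hb | hb <;> omega
  exact Int.one_le_abs this

/-- If the set system `Σ` with incidence matrix `R` has discrepancy at
most 1 (witnessed by some sign vector), then `x*` minimizes `‖Rx‖²` over `{±1}ⁿ`
iff `x*` minimizes `disc(Σ,x) = max_ℓ |[Rx]_ℓ|` over `{±1}ⁿ`. -/
theorem stmt5 (m n : ℕ) (hm : 0 < m) (R : Matrix (Fin m) (Fin n) ℝ)
    (hR : ∀ ℓ v, R ℓ v = 0 ∨ R ℓ v = 1)
    (xstar : Fin n → ℝ) (hxstar : ∀ i, xstar i = 1 ∨ xstar i = -1)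
    (hdisc : ∃ x : Fin n → ℝ, (∀ i, x i = 1 ∨ x i = -1) ∧
      (⨆ ℓ, |R.mulVec x ℓ|) ≤ 1) :
    (∀ y : Fin n → ℝ, (∀ i, y i = 1 ∨ y i = -1) →
        ∑ ℓ, (R.mulVec xstar ℓ) ^ 2 ≤ ∑ ℓ, (R.mulVec y ℓ) ^ 2)
      ↔ (∀ y : Fin n → ℝ, (∀ i, y i = 1 ∨ y i = -1) →
        (⨆ ℓ, |R.mulVec xstar ℓ|) ≤ ⨆ ℓ, |R.mulVec y ℓ|) := by
  haveI : Nonempty (Fin m) := ⟨⟨0, hm⟩⟩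
  obtain ⟨x₀, hx₀, hx₀sup⟩ := hdisc
  have hbdd : ∀ y : Fin n → ℝ, BddAbove (Set.range fun ℓ => |R.mulVec y ℓ|) :=
    fun y => (Set.finite_range _).bddAbove
  have hle_sup : ∀ (y : Fin n → ℝ) ℓ, |R.mulVec y ℓ| ≤ ⨆ ℓ, |R.mulVec y ℓ| :=
    fun y ℓ => le_ciSup (hbdd y) ℓ
  -- integrality
  have hint : ∀ (x : Fin n → ℝ), (∀ i, x i = 1 ∨ x i = -1) → ∀ ℓ,
      ∃ k : ℤ, R.mulVec x ℓ = (k : ℝ) := by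
    intro x hx ℓ
    have : ∀ v, ∃ k : ℤ, R ℓ v * x v = (k : ℝ) := by
      intro v
      rcases hR ℓ v with h | h <;> rcases hx v with h' | h' <;>
        [exact ⟨0, by simp [h, h']⟩; exact ⟨0, by simp [h, h']⟩;
         exact ⟨1, by simp [h, h']⟩; exact ⟨-1, by simp [h, h']⟩]
    choose k hk using this
    refine ⟨∑ v, k v, ?_⟩
    rw [Matrix.mulVec, dotProduct]
    push_cast
    exact Finset.sum_congr rfl fun v _ => hk v
  -- parity
  have hpar : ∀ (x y : Fin n → ℝ), (∀ i, x i = 1 ∨ x i = -1) →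
      (∀ i, y i = 1 ∨ y i = -1) → ∀ ℓ,
      ∃ k : ℤ, R.mulVec x ℓ - R.mulVec y ℓ = 2 * (k : ℝ) := by
    intro x y hx hy ℓ
    have : ∀ v, ∃ k : ℤ, R ℓ v * x v - R ℓ v * y v = 2 * (k : ℝ) := by
      intro v
      rcases hR ℓ v with h | h <;> rcases hx v with h1 | h1 <;> rcases hy v with h2 | h2 <;>
        [exact ⟨0, by rw [h, h1, h2]; norm_num⟩; exact ⟨0, by rw [h, h1, h2]; norm_num⟩;
         exact ⟨0, by rw [h, h1, h2]; norm_num⟩; exact ⟨0, by rw [h, h1, h2]; norm_num⟩;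
         exact ⟨0, by rw [h, h1, h2]; norm_num⟩; exact ⟨1, by rw [h, h1, h2]; norm_num⟩;
         exact ⟨-1, by rw [h, h1, h2]; norm_num⟩; exact ⟨0, by rw [h, h1, h2]; norm_num⟩]
    choose k hk using this
    refine ⟨∑ v, k v, ?_⟩
    have h1 : R.mulVec x ℓ - R.mulVec y ℓ = ∑ v, (R ℓ v * x v - R ℓ v * y v) := by
      rw [Matrix.mulVec, Matrix.mulVec, dotProduct, dotProduct,
        ← Finset.sum_sub_distrib]
    rw [h1, Finset.sum_congr rfl fun v _ => hk v, ← Finset.mul_sum]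
    push_cast
    ring
  -- the key pointwise facts, stated for real values via their integer lifts
  have key : ∀ (x y : Fin n → ℝ), (∀ i, x i = 1 ∨ x i = -1) →
      (∀ i, y i = 1 ∨ y i = -1) → ∀ ℓ, |R.mulVec y ℓ| ≤ 1 →
      (R.mulVec y ℓ) ^ 2 ≤ (R.mulVec x ℓ) ^ 2 ∧
        (R.mulVec y ℓ ≠ 0 → 1 ≤ |R.mulVec x ℓ|) := by
    intro x y hx hy ℓ hyle
    obtain ⟨ka, hka⟩ := hint x hx ℓ
    obtain ⟨kb, hkb⟩ := hint y hy ℓ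
    obtain ⟨k, hk⟩ := hpar x y hx hy ℓ
    have h2 : (2 : ℤ) ∣ ka - kb := by
      refine ⟨k, ?_⟩
      have : ((ka - kb : ℤ) : ℝ) = ((2 * k : ℤ) : ℝ) := by
        push_cast
        rw [← hka, ← hkb]
        push_cast at hk ⊢
        linarith
      exact_mod_cast this
    have hbabs : |kb| ≤ 1 := by
      have : |(kb : ℝ)| ≤ 1 := by rw [← hkb]; exact hyle
      exact_mod_cast this
    have hb : kb = 0 ∨ kb = 1 ∨ kb = -1 := by
      rw [abs_le] at hbabs; omega
    constructor
    · have := zkey1 ka kb h2 hb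
      have h' : ((kb : ℝ)) ^ 2 ≤ ((ka : ℝ)) ^ 2 := by exact_mod_cast this
      rw [hka, hkb]; exact h'
    · intro hne
      have hkb0 : kb ≠ 0 := by
        intro h; apply hne; rw [hkb, h]; simp
      have := zkey3 ka kb h2 hb hkb0
      have h' : (1 : ℝ) ≤ |(ka : ℝ)| := by
        rw [← Int.cast_abs]; exact_mod_cast this
      rw [hka]; exact h'
  have hx₀le : ∀ ℓ, |R.mulVec x₀ ℓ| ≤ 1 := fun ℓ => (hle_sup x₀ ℓ).trans hx₀sup
  constructor
  · -- sum-minimizer → sup-minimizer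
    intro hmin y hy
    -- first derive Q : ∀ ℓ, |R.mulVec xstar ℓ| ≤ 1
    have hterm : ∀ ℓ ∈ Finset.univ, (R.mulVec x₀ ℓ) ^ 2 ≤ (R.mulVec xstar ℓ) ^ 2 :=
      fun ℓ _ => (key xstar x₀ hxstar hx₀ ℓ (hx₀le ℓ)).1
    have hsums : ∑ ℓ, (R.mulVec xstar ℓ) ^ 2 ≤ ∑ ℓ, (R.mulVec x₀ ℓ) ^ 2 := hmin x₀ hx₀
    have heq : ∀ ℓ, (R.mulVec xstar ℓ) ^ 2 = (R.mulVec x₀ ℓ) ^ 2 := by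
      intro ℓ
      by_contra hne
      have hlt : (R.mulVec x₀ ℓ) ^ 2 < (R.mulVec xstar ℓ) ^ 2 :=
        lt_of_le_of_ne (hterm ℓ (Finset.mem_univ ℓ)) (fun h => hne h.symm)
      have : ∑ ℓ, (R.mulVec x₀ ℓ) ^ 2 < ∑ ℓ, (R.mulVec xstar ℓ) ^ 2 :=
        Finset.sum_lt_sum hterm ⟨ℓ, Finset.mem_univ ℓ, hlt⟩
      linarith
    have hQ : ∀ ℓ, |R.mulVec xstar ℓ| ≤ 1 := by
      intro ℓ
      have h1 : (R.mulVec xstar ℓ) ^ 2 ≤ 1 := by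
        rw [heq ℓ]
        have := hx₀le ℓ
        nlinarith [abs_nonneg (R.mulVec x₀ ℓ), sq_abs (R.mulVec x₀ ℓ)]
      nlinarith [abs_nonneg (R.mulVec xstar ℓ), sq_abs (R.mulVec xstar ℓ)]
    -- now show sup inequality
    apply ciSup_le
    intro ℓ
    rcases eq_or_ne (R.mulVec xstar ℓ) 0 with h0 | h0
    · rw [h0, abs_zero]
      exact le_trans (abs_nonneg _) (hle_sup y ⟨0, hm⟩)
    · have h1 : (1 : ℝ) ≤ |R.mulVec y ℓ| := (key y xstar hy hxstar ℓ (hQ ℓ)).2 h0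
      exact (hQ ℓ).trans (h1.trans (hle_sup y ℓ))
  · -- sup-minimizer → sum-minimizer
    intro hmin y hy
    have hQ : ∀ ℓ, |R.mulVec xstar ℓ| ≤ 1 := by
      intro ℓ
      exact (hle_sup xstar ℓ).trans ((hmin x₀ hx₀).trans hx₀sup)
    exact Finset.sum_le_sum fun ℓ _ => (key y xstar hy hxstar ℓ (hQ ℓ)).1
end

section
/- Let R be an m×n random 0-1 matrix with i.i.d. Bernoulli(p) entries, and let f(R) = Max-Cut of the weighted intersection graph of R. Then Var(f(R)) ≤ n·m·p(1−p)·(n−1)p·(np−2p+1); in particular Var(f(R)) = O(n³ m p³). -/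
open Finset Matrix

/-- The 0-1 matrix associated to an outcome `ω` of the i.i.d. Bernoulli entries. -/
def bmat (m n : ℕ) (ω : Fin m → Fin n → Bool) : Matrix (Fin m) (Fin n) ℝ :=
  Matrix.of fun ℓ v => if ω ℓ v then 1 else 0

/-- Probability of outcome `ω` under i.i.d. Bernoulli(p) entries. -/
def bprob (m n : ℕ) (p : ℝ) (ω : Fin m → Fin n → Bool) : ℝ :=
  ∏ ℓ, ∏ v, if ω ℓ v then p else 1 - p

/-- The maximum cut weight of the weighted intersection graph of `bmat m n ω`. -/
noncomputable def maxCutFun (m n : ℕ) (ω : Fin m → Fin n → Bool) : ℝ :=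
  Finset.univ.sup' Finset.univ_nonempty fun s : Fin n → Bool =>
    ∑ i, ∑ j, if i < j ∧ s i ≠ s j then ((bmat m n ω)ᵀ * bmat m n ω) i j else 0

section EfronStein

open Function

/-- weight of an outcome -/
def bw (p : ℝ) {ι : Type*} [Fintype ι] (ω : ι → Bool) : ℝ :=
  ∏ i, if ω i then p else 1 - p

lemma bw_nonneg (p : ℝ) (hp0 : 0 ≤ p) (hp1 : p ≤ 1) {ι : Type*} [Fintype ι]
    (ω : ι → Bool) : 0 ≤ bw p ω :=
  Finset.prod_nonneg fun i _ => by cases ω i <;> simp [hp0, hp1]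

lemma bw_cons (p : ℝ) {N : ℕ} (b : Bool) (ρ : Fin N → Bool) :
    bw p (Fin.cons b ρ) = (if b then p else 1 - p) * bw p ρ := by
  unfold bw
  rw [Fin.prod_univ_succ]
  simp

lemma sum_split {N : ℕ} (G : (Fin (N+1) → Bool) → ℝ) :
    ∑ ω, G ω = ∑ ρ : Fin N → Bool, (G (Fin.cons true ρ) + G (Fin.cons false ρ)) := by
  rw [← Equiv.sum_comp (Fin.consEquiv (fun _ => Bool)) G, Fintype.sum_prod_type]
  rw [Fintype.sum_bool]
  simp [Fin.consEquiv, Finset.sum_add_distrib]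

/-- Efron–Stein for i.i.d. Bernoulli coordinates over `Fin N`. -/
lemma efron_stein_fin (p : ℝ) (hp0 : 0 ≤ p) (hp1 : p ≤ 1) :
    ∀ (N : ℕ) (f : (Fin N → Bool) → ℝ),
    (∑ ω, bw p ω * f ω ^ 2) - (∑ ω, bw p ω * f ω) ^ 2
      ≤ p * (1 - p) * ∑ k, ∑ ω, bw p ω *
          (f (update ω k true) - f (update ω k false)) ^ 2 := by
  intro N
  induction N with
  | zero =>
    intro f
    haveI : Subsingleton (Fin 0 → Bool) := ⟨fun a b => funext fun i => i.elim0⟩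
    rw [Fintype.sum_subsingleton _ (fun i : Fin 0 => i.elim0),
        Fintype.sum_subsingleton _ (fun i : Fin 0 => i.elim0)]
    simp [bw]
  | succ N ih =>
    intro f
    set fT : (Fin N → Bool) → ℝ := fun ρ => f (Fin.cons true ρ) with hfT
    set fF : (Fin N → Bool) → ℝ := fun ρ => f (Fin.cons false ρ) with hfF
    set g : (Fin N → Bool) → ℝ := fun ρ => p * fT ρ + (1 - p) * fF ρ with hg
    have hq0 : (0:ℝ) ≤ 1 - p := by linarith
    have hpq : (0:ℝ) ≤ p * (1 - p) := mul_nonneg hp0 hq0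
    have hE2 : (∑ ω, bw p ω * f ω ^ 2)
        = ∑ ρ : Fin N → Bool, bw p ρ * (p * fT ρ ^ 2 + (1 - p) * fF ρ ^ 2) := by
      rw [sum_split]
      refine Finset.sum_congr rfl fun ρ _ => ?_
      rw [bw_cons, bw_cons]; norm_num [hfT, hfF]; ring
    have hE1 : (∑ ω, bw p ω * f ω) = ∑ ρ : Fin N → Bool, bw p ρ * g ρ := by
      rw [sum_split]
      refine Finset.sum_congr rfl fun ρ _ => ?_
      rw [bw_cons, bw_cons]; norm_num [hg, hfT, hfF]; ring
    -- first coordinate term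
    have hzero : (∑ ω, bw p ω *
          (f (update ω 0 true) - f (update ω 0 false)) ^ 2)
        = ∑ ρ : Fin N → Bool, bw p ρ * (fT ρ - fF ρ) ^ 2 := by
      rw [sum_split]
      refine Finset.sum_congr rfl fun ρ _ => ?_
      rw [bw_cons, bw_cons]
      norm_num [Fin.update_cons_zero, hfT, hfF]
      ring
    -- succ coordinate terms
    have hsucc : ∀ k : Fin N, (∑ ρ : Fin N → Bool, bw p ρ *
          (g (update ρ k true) - g (update ρ k false)) ^ 2)
        ≤ ∑ ω : Fin (N+1) → Bool, bw p ω *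
          (f (update ω k.succ true) - f (update ω k.succ false)) ^ 2 := by
      intro k
      rw [sum_split]
      refine Finset.sum_le_sum fun ρ _ => ?_
      have hW := bw_nonneg p hp0 hp1 ρ
      rw [bw_cons, bw_cons]
      simp only [hg, hfT, hfF, ← Fin.cons_update, if_true, Bool.false_eq_true, if_false]
      generalize f (Fin.cons true (update ρ k true)) = X
      generalize f (Fin.cons true (update ρ k false)) = Y
      generalize f (Fin.cons false (update ρ k true)) = U
      generalize f (Fin.cons false (update ρ k false)) = V
      nlinarith [mul_nonneg (mul_nonneg hp0 hq0) (mul_nonneg hW (sq_nonneg (X - Y - (U - V))))]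
    have hvar : ∑ ρ : Fin N → Bool, bw p ρ * (p * fT ρ ^ 2 + (1 - p) * fF ρ ^ 2)
        = (∑ ρ : Fin N → Bool, bw p ρ * g ρ ^ 2)
          + p * (1 - p) * ∑ ρ : Fin N → Bool, bw p ρ * (fT ρ - fF ρ) ^ 2 := by
      rw [Finset.mul_sum, ← Finset.sum_add_distrib]
      refine Finset.sum_congr rfl fun ρ _ => ?_
      simp only [hg]
      ring
    have hih := ih g
    have hsum : (∑ k : Fin N, ∑ ρ : Fin N → Bool, bw p ρ *
          (g (update ρ k true) - g (update ρ k false)) ^ 2)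
        ≤ ∑ k : Fin N, ∑ ω : Fin (N+1) → Bool, bw p ω *
          (f (update ω k.succ true) - f (update ω k.succ false)) ^ 2 :=
      Finset.sum_le_sum fun k _ => hsucc k
    rw [hE2, hE1, Fin.sum_univ_succ, hzero, hvar]
    nlinarith [hih, mul_le_mul_of_nonneg_left hsum hpq]

lemma bw_comp_equiv (p : ℝ) {ι κ : Type*} [Fintype ι] [Fintype κ] (e : κ ≃ ι)
    (ω : ι → Bool) : bw p (ω ∘ e) = bw p ω := by
  unfold bw
  exact Equiv.prod_comp e (fun x => if ω x then p else 1 - p)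

lemma efron_stein (p : ℝ) (hp0 : 0 ≤ p) (hp1 : p ≤ 1) {ι : Type*} [Fintype ι]
    [DecidableEq ι] (f : (ι → Bool) → ℝ) :
    (∑ ω, bw p ω * f ω ^ 2) - (∑ ω, bw p ω * f ω) ^ 2
      ≤ p * (1 - p) * ∑ k, ∑ ω, bw p ω *
          (f (update ω k true) - f (update ω k false)) ^ 2 := by
  classical
  obtain ⟨e⟩ : Nonempty (ι ≃ Fin (Fintype.card ι)) := ⟨Fintype.equivFin ι⟩
  set N := Fintype.card ι
  set E : (ι → Bool) ≃ (Fin N → Bool) := Equiv.arrowCongr e (Equiv.refl Bool) with hE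
  set F : (Fin N → Bool) → ℝ := fun τ => f (τ ∘ e) with hF
  have key := efron_stein_fin p hp0 hp1 N F
  have s1 : ∀ G : (ι → Bool) → ℝ, (∑ ω, G ω) = ∑ τ : Fin N → Bool, G (τ ∘ e) := by
    intro G
    rw [← Equiv.sum_comp E.symm G]
    rfl
  have hupd : ∀ (τ : Fin N → Bool) (j : Fin N) (c : Bool),
      (update τ j c) ∘ e = update (τ ∘ e) (e.symm j) c := by
    intro τ j c
    exact Function.update_comp_equiv τ e j c
  have s2 : ∀ k : ι, (∑ ω : ι → Bool, bw p ω *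
        (f (update ω k true) - f (update ω k false)) ^ 2)
      = ∑ τ : Fin N → Bool, bw p τ *
        (F (update τ (e k) true) - F (update τ (e k) false)) ^ 2 := by
    intro k
    rw [s1]
    refine Finset.sum_congr rfl fun τ _ => ?_
    rw [bw_comp_equiv p e, hF]
    simp only [hupd, e.symm_apply_apply]
  have s3 : (∑ k : ι, ∑ ω : ι → Bool, bw p ω *
        (f (update ω k true) - f (update ω k false)) ^ 2)
      = ∑ j : Fin N, ∑ τ : Fin N → Bool, bw p τ *
        (F (update τ j true) - F (update τ j false)) ^ 2 := by
    rw [← Equiv.sum_comp e.symm]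
    refine Finset.sum_congr rfl fun j _ => ?_
    rw [s2, e.apply_symm_apply]
  have s4 : (∑ ω : ι → Bool, bw p ω * f ω ^ 2) = ∑ τ : Fin N → Bool, bw p τ * F τ ^ 2 := by
    rw [s1]
    exact Finset.sum_congr rfl fun τ _ => by rw [bw_comp_equiv p e]
  have s5 : (∑ ω : ι → Bool, bw p ω * f ω) = ∑ τ : Fin N → Bool, bw p τ * F τ := by
    rw [s1]
    exact Finset.sum_congr rfl fun τ _ => by rw [bw_comp_equiv p e]
  rw [s3, s4, s5]
  exact key

/-! ### Expectation computations -/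

def chi (b : Bool) : ℝ := if b then 1 else 0

lemma sum_prod_bool {ι : Type*} [Fintype ι] [DecidableEq ι] (h : ι → Bool → ℝ) :
    ∑ ω : ι → Bool, ∏ i, h i (ω i) = ∏ i, (h i true + h i false) := by
  have := Finset.prod_univ_sum (fun _ : ι => (univ : Finset Bool)) h
  rw [Fintype.piFinset_univ] at this
  simp only [Fintype.sum_bool] at this
  rw [this]

lemma E_chi_chi {ι : Type*} [Fintype ι] [DecidableEq ι] (p : ℝ) (a b : ι) :
    ∑ ω : ι → Bool, bw p ω * (chi (ω a) * chi (ω b))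
      = if a = b then p else p ^ 2 := by
  have hrw : ∀ ω : ι → Bool, bw p ω * (chi (ω a) * chi (ω b))
      = ∏ i, ((if ω i then p else 1 - p) *
          ((if i = a then chi (ω i) else 1) * (if i = b then chi (ω i) else 1))) := by
    intro ω
    rw [Finset.prod_mul_distrib, Finset.prod_mul_distrib,
      Finset.prod_ite_eq' univ a (fun i => chi (ω i)),
      Finset.prod_ite_eq' univ b (fun i => chi (ω i))]
    simp [bw]
  calc ∑ ω : ι → Bool, bw p ω * (chi (ω a) * chi (ω b))
      = ∑ ω : ι → Bool, ∏ i, ((if ω i then p else 1 - p) *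
          ((if i = a then chi (ω i) else 1) * (if i = b then chi (ω i) else 1))) :=
        Finset.sum_congr rfl fun ω _ => hrw ω
    _ = ∏ i, (p * ((if i = a then chi true else 1) * (if i = b then chi true else 1))
          + (1 - p) * ((if i = a then chi false else 1) * (if i = b then chi false else 1))) := by
        rw [sum_prod_bool (fun i c => (if c then p else 1 - p) *
          ((if i = a then chi c else 1) * (if i = b then chi c else 1)))]
        norm_num
    _ = ∏ i, (p + (1 - p) * ((if i = a then (0:ℝ) else 1) * (if i = b then (0:ℝ) else 1))) := by
        refine Finset.prod_congr rfl fun i _ => ?_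
        simp [chi]
    _ = if a = b then p else p ^ 2 := by
        by_cases hab : a = b
        · subst hab
          rw [if_pos rfl]
          calc ∏ i, (p + (1 - p) * ((if i = a then (0:ℝ) else 1) * (if i = a then (0:ℝ) else 1)))
              = ∏ i, (if i = a then p else 1) := by
                refine Finset.prod_congr rfl fun i _ => ?_
                by_cases hia : i = a <;> simp [hia]
            _ = p := by rw [Finset.prod_ite_eq' univ a (fun _ => p)]; simp
        · rw [if_neg hab]
          calc ∏ i, (p + (1 - p) * ((if i = a then (0:ℝ) else 1) * (if i = b then (0:ℝ) else 1)))
              = ∏ i, ((if i = a then p else 1) * (if i = b then p else 1)) := by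
                refine Finset.prod_congr rfl fun i _ => ?_
                by_cases hia : i = a <;> by_cases hib : i = b
                · exact absurd (hia ▸ hib ▸ rfl) hab
                · simp [hia, hib, hab]
                · simp [hia, hib, Ne.symm hab]
                · simp [hia, hib]
            _ = p ^ 2 := by
                rw [Finset.prod_mul_distrib, Finset.prod_ite_eq' univ a (fun _ => p),
                  Finset.prod_ite_eq' univ b (fun _ => p)]
                simp [sq]

lemma card_erase_real {n : ℕ} (i : Fin n) :
    (((univ : Finset (Fin n)).erase i).card : ℝ) = (n : ℝ) - 1 := by
  rw [Finset.card_erase_of_mem (mem_univ i), card_univ, Fintype.card_fin]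
  have hn : 1 ≤ n := i.pos
  push_cast [Nat.cast_sub hn]
  ring

lemma E_S_sq (m n : ℕ) (p : ℝ) (ℓ : Fin m) (i : Fin n) :
    ∑ x : Fin m × Fin n → Bool, bw p x * (∑ v ∈ univ.erase i, chi (x (ℓ, v))) ^ 2
      = ((n:ℝ) - 1) * p * ((n:ℝ) * p - 2 * p + 1) := by
  have step1 : ∀ x : Fin m × Fin n → Bool,
      bw p x * (∑ v ∈ univ.erase i, chi (x (ℓ, v))) ^ 2
      = ∑ v ∈ univ.erase i, ∑ v' ∈ univ.erase i, bw p x * (chi (x (ℓ, v)) * chi (x (ℓ, v'))) := by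
    intro x
    rw [sq, Finset.sum_mul_sum, Finset.mul_sum]
    exact Finset.sum_congr rfl fun v _ => by rw [Finset.mul_sum]
  calc ∑ x : Fin m × Fin n → Bool, bw p x * (∑ v ∈ univ.erase i, chi (x (ℓ, v))) ^ 2
      = ∑ v ∈ univ.erase i, ∑ v' ∈ univ.erase i,
          ∑ x : Fin m × Fin n → Bool, bw p x * (chi (x (ℓ, v)) * chi (x (ℓ, v'))) := by
        rw [Finset.sum_congr rfl fun x _ => step1 x]
        rw [Finset.sum_comm]
        exact Finset.sum_congr rfl fun v _ => Finset.sum_comm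
    _ = ∑ v ∈ univ.erase i, ∑ v' ∈ univ.erase i, if v = v' then p else p ^ 2 := by
        refine Finset.sum_congr rfl fun v _ => Finset.sum_congr rfl fun v' _ => ?_
        rw [E_chi_chi p (ℓ, v) (ℓ, v')]
        simp [Prod.ext_iff]
    _ = ∑ v ∈ univ.erase i, (((n:ℝ) - 1) * p ^ 2 + (p - p ^ 2)) := by
        refine Finset.sum_congr rfl fun v hv => ?_
        have : ∀ v' : Fin n, (if v = v' then p else p ^ 2)
            = p ^ 2 + (if v = v' then p - p ^ 2 else 0) := by
          intro v'; by_cases h : v = v' <;> simp [h]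
        rw [Finset.sum_congr rfl fun v' _ => this v', Finset.sum_add_distrib,
          Finset.sum_const, Finset.sum_ite_eq _ v (fun _ => p - p ^ 2), if_pos hv,
          nsmul_eq_mul, card_erase_real]
    _ = ((n:ℝ) - 1) * p * ((n:ℝ) * p - 2 * p + 1) := by
        rw [Finset.sum_const, nsmul_eq_mul, card_erase_real]
        ring

/-! ### Lipschitz property of the max-cut functional -/

noncomputable def cutVal (m n : ℕ) (ω : Fin m → Fin n → Bool) (s : Fin n → Bool) : ℝ :=
  ∑ j, ∑ j', if j < j' ∧ s j ≠ s j' then ((bmat m n ω)ᵀ * bmat m n ω) j j' else 0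

lemma maxCutFun_eq (m n : ℕ) (ω : Fin m → Fin n → Bool) :
    maxCutFun m n ω = Finset.univ.sup' Finset.univ_nonempty (cutVal m n ω) := rfl

lemma gram_apply (m n : ℕ) (ω : Fin m → Fin n → Bool) (j j' : Fin n) :
    ((bmat m n ω)ᵀ * bmat m n ω) j j'
      = ∑ a, (if ω a j then (1:ℝ) else 0) * (if ω a j' then (1:ℝ) else 0) := by
  rw [Matrix.mul_apply]
  exact Finset.sum_congr rfl fun a _ => by simp [bmat, Matrix.transpose_apply]

lemma gram_mono (m n : ℕ) (ωF ωT : Fin m → Fin n → Bool)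
    (hle : ∀ a b, ωF a b = true → ωT a b = true) (j j' : Fin n) :
    ((bmat m n ωF)ᵀ * bmat m n ωF) j j' ≤ ((bmat m n ωT)ᵀ * bmat m n ωT) j j' := by
  rw [gram_apply, gram_apply]
  refine Finset.sum_le_sum fun a _ => ?_
  have h1 : ∀ b : Fin n, (if ωF a b then (1:ℝ) else 0) ≤ (if ωT a b then 1 else 0) := by
    intro b
    by_cases h : ωF a b
    · rw [if_pos h, if_pos (hle a b h)]
    · rw [if_neg h]; positivity
  have h0 : ∀ (ω : Fin m → Fin n → Bool) (b : Fin n),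
      (0:ℝ) ≤ (if ω a b then (1:ℝ) else 0) := by intro ω b; positivity
  exact mul_le_mul (h1 j) (h1 j') (h0 ωF j') (h0 ωT j)

lemma cutVal_mono (m n : ℕ) (ωF ωT : Fin m → Fin n → Bool)
    (hle : ∀ a b, ωF a b = true → ωT a b = true) (s : Fin n → Bool) :
    cutVal m n ωF s ≤ cutVal m n ωT s := by
  unfold cutVal
  refine Finset.sum_le_sum fun j _ => Finset.sum_le_sum fun j' _ => ?_
  by_cases h : j < j' ∧ s j ≠ s j'
  · rw [if_pos h, if_pos h]; exact gram_mono m n ωF ωT hle j j'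
  · rw [if_neg h, if_neg h]

lemma gram_diff (m n : ℕ) (ℓ : Fin m) (i : Fin n) (ωT ωF : Fin m → Fin n → Bool)
    (hT : ωT ℓ i = true) (hF : ωF ℓ i = false)
    (hagree : ∀ a b, (a, b) ≠ (ℓ, i) → ωT a b = ωF a b)
    (j j' : Fin n) (hjj : j ≠ j') :
    ((bmat m n ωT)ᵀ * bmat m n ωT) j j' - ((bmat m n ωF)ᵀ * bmat m n ωF) j j'
      = (if j = i then (if ωF ℓ j' then (1:ℝ) else 0) else 0)
        + (if j' = i then (if ωF ℓ j then (1:ℝ) else 0) else 0) := by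
  rw [gram_apply, gram_apply, ← Finset.sum_sub_distrib]
  rw [Finset.sum_eq_single ℓ]
  · by_cases hj : j = i
    · have hj' : j' ≠ i := fun h => hjj (hj.trans h.symm)
      have hω : ωT ℓ j' = ωF ℓ j' := hagree ℓ j' (by simp [hj'])
      subst hj
      rw [hT, hF, hω]
      simp [hjj.symm]
    · by_cases hj' : j' = i
      · have hω : ωT ℓ j = ωF ℓ j := hagree ℓ j (by simp [hj])
        subst hj'
        rw [hT, hF, hω]
        simp [hj]
      · have hω : ωT ℓ j = ωF ℓ j := hagree ℓ j (by simp [hj])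
        have hω' : ωT ℓ j' = ωF ℓ j' := hagree ℓ j' (by simp [hj'])
        rw [hω, hω']
        simp [hj, hj']
  · intro a _ ha
    have h1 : ωT a j = ωF a j := hagree a j (by simp [ha])
    have h2 : ωT a j' = ωF a j' := hagree a j' (by simp [ha])
    rw [h1, h2]; ring
  · intro h; exact absurd (mem_univ ℓ) h

lemma cutVal_diff_le (m n : ℕ) (ℓ : Fin m) (i : Fin n) (ωT ωF : Fin m → Fin n → Bool)
    (hT : ωT ℓ i = true) (hF : ωF ℓ i = false)
    (hagree : ∀ a b, (a, b) ≠ (ℓ, i) → ωT a b = ωF a b) (s : Fin n → Bool) :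
    cutVal m n ωT s - cutVal m n ωF s
      ≤ ∑ v ∈ univ.erase i, (if ωF ℓ v then (1:ℝ) else 0) := by
  set r : Fin n → ℝ := fun v => if ωF ℓ v then (1:ℝ) else 0 with hr
  have hr0 : ∀ v, 0 ≤ r v := fun v => by rw [hr]; positivity
  have step1 : cutVal m n ωT s - cutVal m n ωF s
      = ∑ j, ∑ j', if j < j' ∧ s j ≠ s j' then
          (((bmat m n ωT)ᵀ * bmat m n ωT) j j' - ((bmat m n ωF)ᵀ * bmat m n ωF) j j') else 0 := by
    unfold cutVal
    rw [← Finset.sum_sub_distrib]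
    refine Finset.sum_congr rfl fun j _ => ?_
    rw [← Finset.sum_sub_distrib]
    refine Finset.sum_congr rfl fun j' _ => ?_
    by_cases h : j < j' ∧ s j ≠ s j' <;> simp [h]
  have step2 : ∑ j, ∑ j', (if j < j' ∧ s j ≠ s j' then
          (((bmat m n ωT)ᵀ * bmat m n ωT) j j' - ((bmat m n ωF)ᵀ * bmat m n ωF) j j') else 0)
      ≤ ∑ j, ∑ j' : Fin n, ((if j = i ∧ i < j' then r j' else 0)
          + (if j' = i ∧ j < i then r j else 0)) := by
    refine Finset.sum_le_sum fun j _ => Finset.sum_le_sum fun j' _ => ?_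
    by_cases h : j < j' ∧ s j ≠ s j'
    · rw [if_pos h]
      rw [gram_diff m n ℓ i ωT ωF hT hF hagree j j' (ne_of_lt h.1)]
      by_cases hj : j = i
      · have hj'2 : ¬ j' = i := fun he => (ne_of_lt h.1) (hj.trans he.symm)
        have hlt : i < j' := hj ▸ h.1
        simp [hj, hj'2, hlt, hr]
      · by_cases hj' : j' = i
        · have hlt : j < i := hj' ▸ h.1
          simp [hj, hj', hlt, hr]
        · simp [hj, hj']
    · rw [if_neg h]
      have : (0:ℝ) ≤ (if j = i ∧ i < j' then r j' else 0) := by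
        by_cases hc : j = i ∧ i < j' <;> simp [hc, hr0]
      have h2 : (0:ℝ) ≤ (if j' = i ∧ j < i then r j else 0) := by
        by_cases hc : j' = i ∧ j < i <;> simp [hc, hr0]
      linarith
  have step3 : ∑ j, ∑ j' : Fin n, ((if j = i ∧ i < j' then r j' else 0)
        + (if j' = i ∧ j < i then r j else 0))
      = ∑ v ∈ univ.erase i, r v := by
    have e1 : ∀ j : Fin n, (∑ j' : Fin n, (if j = i ∧ i < j' then r j' else 0))
        = if j = i then (∑ j' : Fin n, if i < j' then r j' else 0) else 0 := by
      intro j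
      by_cases hj : j = i
      · rw [if_pos hj]
        exact Finset.sum_congr rfl fun j' _ => by
          by_cases h : i < j' <;> simp [h, hj]
      · rw [if_neg hj]
        refine Finset.sum_eq_zero fun j' _ => by simp [hj]
    have e2 : ∀ j : Fin n, (∑ j' : Fin n, (if j' = i ∧ j < i then r j else 0))
        = if j < i then r j else 0 := by
      intro j
      by_cases hj : j < i
      · simp only [hj, and_true]
        rw [Finset.sum_ite_eq' univ i (fun _ => r j)]
        simp
      · simp [hj]
    rw [Finset.sum_congr rfl fun j _ => by rw [Finset.sum_add_distrib, e1 j, e2 j]]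
    rw [Finset.sum_add_distrib, Finset.sum_ite_eq' univ i
      (fun _ => ∑ j' : Fin n, if i < j' then r j' else 0)]
    simp only [mem_univ, if_true]
    have : ∑ v ∈ univ.erase i, r v = (∑ v, r v) - r i := Finset.sum_erase_eq_sub (mem_univ i)
    rw [this]
    have : (∑ j' : Fin n, if i < j' then r j' else 0) + (∑ j : Fin n, if j < i then r j else 0)
        = ∑ v : Fin n, ((if i < v then r v else 0) + (if v < i then r v else 0)) := by
      rw [Finset.sum_add_distrib]
    rw [this]
    have : ∑ v : Fin n, ((if i < v then r v else 0) + (if v < i then r v else 0))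
        = ∑ v : Fin n, (r v - (if v = i then r v else 0)) := by
      refine Finset.sum_congr rfl fun v _ => ?_
      rcases lt_trichotomy v i with h | h | h
      · simp [h, not_lt_of_gt h, ne_of_lt h]
      · simp [h]
      · simp [h, not_lt_of_gt h, (ne_of_gt h)]
    rw [this, Finset.sum_sub_distrib, Finset.sum_ite_eq' univ i r]
    simp
  calc cutVal m n ωT s - cutVal m n ωF s
      ≤ ∑ j, ∑ j' : Fin n, ((if j = i ∧ i < j' then r j' else 0)
          + (if j' = i ∧ j < i then r j else 0)) := by rw [step1]; exact step2
    _ = ∑ v ∈ univ.erase i, r v := step3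

lemma maxCut_lip (m n : ℕ) (ℓ : Fin m) (i : Fin n) (ωT ωF : Fin m → Fin n → Bool)
    (hT : ωT ℓ i = true) (hF : ωF ℓ i = false)
    (hagree : ∀ a b, (a, b) ≠ (ℓ, i) → ωT a b = ωF a b) :
    0 ≤ maxCutFun m n ωT - maxCutFun m n ωF ∧
    maxCutFun m n ωT - maxCutFun m n ωF
      ≤ ∑ v ∈ univ.erase i, (if ωF ℓ v then (1:ℝ) else 0) := by
  have hle : ∀ a b, ωF a b = true → ωT a b = true := by
    intro a b hab
    by_cases h : (a, b) = (ℓ, i)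
    · simp only [Prod.mk.injEq] at h
      rw [h.1, h.2] at hab
      rw [hab] at hF; exact absurd hF (by simp)
    · rw [hagree a b h]; exact hab
  constructor
  · rw [sub_nonneg, maxCutFun_eq, maxCutFun_eq]
    refine Finset.sup'_le _ _ fun s _ => ?_
    exact le_trans (cutVal_mono m n ωF ωT hle s) (Finset.le_sup' _ (mem_univ s))
  · rw [maxCutFun_eq, maxCutFun_eq, sub_le_iff_le_add]
    refine Finset.sup'_le _ _ fun s _ => ?_
    have h1 := cutVal_diff_le m n ℓ i ωT ωF hT hF hagree s
    have h2 : cutVal m n ωF s ≤ univ.sup' univ_nonempty (cutVal m n ωF) :=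
      Finset.le_sup' _ (mem_univ s)
    linarith

end EfronStein

/-- Efron–Stein variance bound for the Max-Cut of a weighted random
intersection graph: `Var(f(R)) ≤ n m p(1−p) (n−1)p (np−2p+1) = O(n³ m p³)`. -/
theorem stmt10 (m n : ℕ) (p : ℝ) (hp0 : 0 ≤ p) (hp1 : p ≤ 1) :
    (∑ ω : Fin m → Fin n → Bool, bprob m n p ω * (maxCutFun m n ω) ^ 2)
      - (∑ ω : Fin m → Fin n → Bool, bprob m n p ω * maxCutFun m n ω) ^ 2
      ≤ (n : ℝ) * (m : ℝ) * (p * (1 - p)) * ((n : ℝ) - 1) * p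
          * ((n : ℝ) * p - 2 * p + 1) := by
  classical
  set F : ((Fin m × Fin n) → Bool) → ℝ :=
    fun x => maxCutFun m n (fun a b => x (a, b)) with hFdef
  have hbw : ∀ x : (Fin m × Fin n) → Bool,
      bprob m n p (fun a b => x (a, b)) = bw p x := by
    intro x
    unfold bprob bw
    rw [Fintype.prod_prod_type]
  have htrans : ∀ G : (Fin m → Fin n → Bool) → ℝ,
      (∑ ω : Fin m → Fin n → Bool, G ω)
        = ∑ x : (Fin m × Fin n) → Bool, G (fun a b => x (a, b)) := by
    intro G
    rw [← Equiv.sum_comp (Equiv.curry (Fin m) (Fin n) Bool) G]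
    rfl
  have hL2 : (∑ ω : Fin m → Fin n → Bool, bprob m n p ω * (maxCutFun m n ω) ^ 2)
      = ∑ x : (Fin m × Fin n) → Bool, bw p x * F x ^ 2 := by
    rw [htrans (fun ω => bprob m n p ω * (maxCutFun m n ω) ^ 2)]
    exact Finset.sum_congr rfl fun x _ => by rw [hbw]
  have hL1 : (∑ ω : Fin m → Fin n → Bool, bprob m n p ω * maxCutFun m n ω)
      = ∑ x : (Fin m × Fin n) → Bool, bw p x * F x := by
    rw [htrans (fun ω => bprob m n p ω * maxCutFun m n ω)]
    exact Finset.sum_congr rfl fun x _ => by rw [hbw]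
  have ES := efron_stein p hp0 hp1 F
  rw [hL2, hL1]
  have hq0 : (0:ℝ) ≤ 1 - p := by linarith
  have hpq : (0:ℝ) ≤ p * (1 - p) := mul_nonneg hp0 hq0
  set C : ℝ := ((n:ℝ) - 1) * p * ((n:ℝ) * p - 2 * p + 1) with hC
  have hterm : ∀ k : Fin m × Fin n,
      (∑ x : (Fin m × Fin n) → Bool, bw p x *
        (F (Function.update x k true) - F (Function.update x k false)) ^ 2) ≤ C := by
    rintro ⟨ℓ, i⟩
    have hbound : ∀ x : (Fin m × Fin n) → Bool,
        bw p x * (F (Function.update x (ℓ, i) true) - F (Function.update x (ℓ, i) false)) ^ 2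
          ≤ bw p x * (∑ v ∈ univ.erase i, chi (x (ℓ, v))) ^ 2 := by
      intro x
      refine mul_le_mul_of_nonneg_left ?_ (bw_nonneg p hp0 hp1 x)
      set ωT : Fin m → Fin n → Bool := fun a b => Function.update x (ℓ, i) true (a, b)
      set ωF : Fin m → Fin n → Bool := fun a b => Function.update x (ℓ, i) false (a, b)
      have hT : ωT ℓ i = true := Function.update_self (ℓ, i) true x
      have hF : ωF ℓ i = false := Function.update_self (ℓ, i) false x
      have hagree : ∀ a b, (a, b) ≠ (ℓ, i) → ωT a b = ωF a b := by
        intro a b hab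
        show Function.update x (ℓ, i) true (a, b) = Function.update x (ℓ, i) false (a, b)
        rw [Function.update_of_ne hab, Function.update_of_ne hab]
      obtain ⟨h1, h2⟩ := maxCut_lip m n ℓ i ωT ωF hT hF hagree
      have hSS : (∑ v ∈ univ.erase i, (if ωF ℓ v then (1:ℝ) else 0))
          = ∑ v ∈ univ.erase i, chi (x (ℓ, v)) := by
        refine Finset.sum_congr rfl fun v hv => ?_
        have hvi : ((ℓ, v) : Fin m × Fin n) ≠ (ℓ, i) := by
          simp [Prod.ext_iff, Finset.ne_of_mem_erase hv]
        show (if Function.update x (ℓ, i) false (ℓ, v) then (1:ℝ) else 0) = chi (x (ℓ, v))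
        rw [Function.update_of_ne hvi]
        rfl
      rw [hSS] at h2
      have hD : F (Function.update x (ℓ, i) true) - F (Function.update x (ℓ, i) false)
          = maxCutFun m n ωT - maxCutFun m n ωF := rfl
      rw [hD]
      nlinarith [h1, h2]
    calc (∑ x : (Fin m × Fin n) → Bool, bw p x *
        (F (Function.update x (ℓ, i) true) - F (Function.update x (ℓ, i) false)) ^ 2)
        ≤ ∑ x : (Fin m × Fin n) → Bool, bw p x * (∑ v ∈ univ.erase i, chi (x (ℓ, v))) ^ 2 :=
          Finset.sum_le_sum fun x _ => hbound x
      _ = C := E_S_sq m n p ℓ i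
  have hsum : (∑ k : Fin m × Fin n, ∑ x : (Fin m × Fin n) → Bool, bw p x *
        (F (Function.update x k true) - F (Function.update x k false)) ^ 2)
      ≤ (m * n : ℕ) * C := by
    calc (∑ k : Fin m × Fin n, ∑ x : (Fin m × Fin n) → Bool, bw p x *
          (F (Function.update x k true) - F (Function.update x k false)) ^ 2)
        ≤ ∑ _k : Fin m × Fin n, C := Finset.sum_le_sum fun k _ => hterm k
      _ = (m * n : ℕ) * C := by
          rw [Finset.sum_const, card_univ, Fintype.card_prod, Fintype.card_fin,
            Fintype.card_fin, nsmul_eq_mul]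
  have final := le_trans ES (mul_le_mul_of_nonneg_left hsum hpq)
  calc (∑ x : (Fin m × Fin n) → Bool, bw p x * F x ^ 2)
        - (∑ x : (Fin m × Fin n) → Bool, bw p x * F x) ^ 2
      ≤ p * (1 - p) * ((m * n : ℕ) * C) := final
    _ = (n : ℝ) * (m : ℝ) * (p * (1 - p)) * ((n : ℝ) - 1) * p
          * ((n : ℝ) * p - 2 * p + 1) := by
        rw [hC]
        push_cast
        ring
end

section
/- For m = n, p = c/n with constant c > 0, and k ≥ 3, the expected number of closed vertex-label sequences of size k in the weighted random intersection graph satisfies E[C_k] = (1/k)·(n!/(n−k)!)²·(c/n)^{2k} ≤ (e²/(2π))·(n/(k(n−k)))·c^{2k}, which is at most (e/(2π))·c^{2k} for all sufficiently large n. -/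
/-!
Exchanging the sums over `ω` and over pairs `(v, l)`, an injective pair contributes the probability
that `2k` distinct entries of `ω` all equal `true`, namely `p ^ (2k)`, and there are
`n.descFactorial k * m.descFactorial k` such pairs. For the bounds, `n.descFactorial k ≤ n ^ k`
already gives `E[C_k] ≤ c ^ (2k) / k`, which lies below both right-hand sides since
`e² / (2π) ≥ 1`, `n / (n - k) ≥ 1` and `e / (2π) > 1 / 3`; so Stirling's formula is not needed and
the final bound holds for every `n > k`.
-/

open Finset

/-- Number of rooted closed vertex-label sequences of size `k` (each unrooted
sequence counted `k` times). -/
def seqCount (m n k : ℕ) (ω : Fin m → Fin n → Bool) : ℕ :=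
  (Finset.univ.filter fun vl : (Fin k → Fin n) × (Fin k → Fin m) =>
    Function.Injective vl.1 ∧ Function.Injective vl.2 ∧
    ∀ i, ω (vl.2 i) (vl.1 i) = true ∧ ω (vl.2 i) (vl.1 (finRotate k i)) = true).card

lemma finRotate_ne_self {k : ℕ} (hk : 2 ≤ k) (i : Fin k) : finRotate k i ≠ i :=
  Equiv.Perm.mem_support.1 (by simp [support_finRotate_of_le hk])

lemma card_filter_injective (k n : ℕ) :
    #{f : Fin k → Fin n | Function.Injective f} = n.descFactorial k := by
  rw [← Fintype.card_subtype,
    Fintype.card_congr (Equiv.subtypeInjectiveEquivEmbedding _ _),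
    Fintype.card_embedding_eq, Fintype.card_fin, Fintype.card_fin]

lemma sum_ite_forall_mem_prod_bernoulli {α : Type*} [Fintype α] [DecidableEq α]
    (E : Finset α) (p : ℝ) :
    ∑ σ : α → Bool,
      (if ∀ a ∈ E, σ a = true then ∏ a, (if σ a then p else 1 - p) else 0) = p ^ #E := by
  have factor : ∀ σ : α → Bool,
      (if ∀ a ∈ E, σ a = true then ∏ a, (if σ a then p else 1 - p) else 0)
        = ∏ a, (if σ a then p else if a ∈ E then 0 else 1 - p) := by
    intro σ
    split_ifs with h
    · refine prod_congr rfl fun a _ => ?_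
      cases hσ : σ a
      · simp [show a ∉ E from fun ha => by simpa [hσ] using h a ha]
      · rfl
    · push Not at h
      obtain ⟨a, ha, hσ⟩ := h
      exact (prod_eq_zero (mem_univ a) (by simp [ha, hσ])).symm
  rw [sum_congr rfl fun σ _ => factor σ,
    ← Fintype.prod_sum fun a (b : Bool) => if b then p else if a ∈ E then 0 else 1 - p]
  calc ∏ a, ∑ b : Bool, (if b then p else if a ∈ E then 0 else 1 - p)
      = ∏ a, (if a ∈ E then p else 1) := by
        refine prod_congr rfl fun a _ => ?_
        by_cases ha : a ∈ E <;> simp [ha]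
    _ = p ^ #E := by rw [prod_ite_mem, univ_inter, prod_const]

lemma sum_bprob_ite_forall_mem {m n : ℕ} (E : Finset (Fin m × Fin n)) (p : ℝ) :
    ∑ ω, (if ∀ e ∈ E, ω e.1 e.2 = true then bprob m n p ω else 0) = p ^ #E := by
  rw [← sum_ite_forall_mem_prod_bernoulli, ← (Equiv.curry _ _ _).sum_comp]
  simp [bprob, Fintype.prod_prod_type]

section Cycle

variable {m n k : ℕ} (v : Fin k → Fin n) (l : Fin k → Fin m)

def cycleEdge : Fin k ⊕ Fin k → Fin m × Fin n :=
  Sum.elim (fun i => (l i, v i)) (fun i => (l i, v (finRotate k i)))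

variable {v l}

lemma cycleEdge_injective (hk : 2 ≤ k) (hv : Function.Injective v)
    (hl : Function.Injective l) : Function.Injective (cycleEdge v l) := by
  rintro (i | i) (j | j) h <;> simp only [cycleEdge, Sum.elim_inl, Sum.elim_inr,
    Prod.mk.injEq, Sum.inl.injEq, Sum.inr.injEq, reduceCtorEq] at h ⊢ <;>
    obtain ⟨rfl, h⟩ := And.imp_left (@hl _ _) h
  · rfl
  · exact finRotate_ne_self hk i (hv h).symm
  · exact finRotate_ne_self hk i (hv h)
  · rfl

lemma sum_bprob_ite_closed (hk : 2 ≤ k) (hv : Function.Injective v)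
    (hl : Function.Injective l) (p : ℝ) :
    ∑ ω, (if ∀ i, ω (l i) (v i) = true ∧ ω (l i) (v (finRotate k i)) = true
      then bprob m n p ω else 0) = p ^ (2 * k) := by
  have hcard : #(univ.image (cycleEdge v l)) = 2 * k := by
    rw [card_image_of_injective _ (cycleEdge_injective hk hv hl)]
    simp [two_mul]
  rw [← hcard, ← sum_bprob_ite_forall_mem]
  simp only [forall_mem_image, mem_univ, true_imp_iff, Sum.forall, cycleEdge, Sum.elim_inl,
    Sum.elim_inr, forall_and]

end Cycle

theorem sum_bprob_mul_seqCount {m n k : ℕ} (hk : 2 ≤ k) (p : ℝ) :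
    ∑ ω, bprob m n p ω * seqCount m n k ω
      = n.descFactorial k * m.descFactorial k * p ^ (2 * k) := by
  simp only [seqCount, card_filter, Nat.cast_sum, Nat.cast_ite, Nat.cast_one, Nat.cast_zero,
    mul_sum, mul_ite, mul_one, mul_zero]
  rw [sum_comm]
  calc ∑ vl : (Fin k → Fin n) × (Fin k → Fin m), ∑ ω, _
      = ∑ vl : (Fin k → Fin n) × (Fin k → Fin m),
          if Function.Injective vl.1 ∧ Function.Injective vl.2 then p ^ (2 * k) else 0 := by
        refine sum_congr rfl fun vl _ => ?_
        by_cases hinj : Function.Injective vl.1 ∧ Function.Injective vl.2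
        · rw [if_pos hinj, ← sum_bprob_ite_closed hk hinj.1 hinj.2]
          simp only [hinj, true_and]
        · rw [if_neg hinj]
          exact sum_eq_zero fun ω _ => if_neg (by tauto)
    _ = n.descFactorial k * m.descFactorial k * p ^ (2 * k) := by
        rw [← sum_filter, sum_const, ← univ_product_univ, filter_product, card_product,
          card_filter_injective, card_filter_injective, nsmul_eq_mul, Nat.cast_mul]

lemma descFactorial_sq_mul_div_pow_le (n k : ℕ) (c : ℝ) :
    (n.descFactorial k : ℝ) ^ 2 * (c / n) ^ (2 * k) ≤ c ^ (2 * k) := by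
  have hpow : (n.descFactorial k : ℝ) ^ 2 ≤ (n : ℝ) ^ (2 * k) := by
    rw [pow_mul', ← Nat.cast_pow, ← Nat.cast_pow]
    exact_mod_cast Nat.pow_le_pow_left (Nat.descFactorial_le_pow n k) 2
  have hc : 0 ≤ c ^ (2 * k) := (even_two_mul k).pow_nonneg c
  rw [div_pow, mul_div_assoc']
  exact div_le_of_le_mul₀ (by positivity) hc
    ((mul_comm _ _).trans_le (mul_le_mul_of_nonneg_left hpow hc))

lemma one_div_le_div_mul_sub {a b : ℝ} (ha : 0 < a) (hab : a < b) :
    1 / a ≤ b / (a * (b - a)) := by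
  rw [div_le_div_iff₀ ha (mul_pos ha (sub_pos.2 hab))]
  nlinarith

lemma one_le_exp_one_sq_div_two_pi : 1 ≤ Real.exp 1 ^ 2 / (2 * Real.pi) := by
  rw [one_le_div (by positivity)]
  nlinarith [Real.exp_one_gt_d9, Real.pi_lt_d2]

lemma one_div_three_le_exp_one_div_two_pi : 1 / 3 ≤ Real.exp 1 / (2 * Real.pi) := by
  rw [div_le_div_iff₀ (by norm_num) (by positivity)]
  nlinarith [Real.exp_one_gt_d9, Real.pi_lt_d2]

theorem stmt14_general (k : ℕ) (hk : 3 ≤ k) (c : ℝ) :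
    (∀ n : ℕ, k < n →
      ((∑ ω : Fin n → Fin n → Bool,
          bprob n n (c / n) ω * ((seqCount n n k ω : ℝ) / k))
        = (1 / (k : ℝ)) * ((n.descFactorial k : ℝ)) ^ 2 * (c / n) ^ (2 * k)) ∧
      (1 / (k : ℝ)) * ((n.descFactorial k : ℝ)) ^ 2 * (c / n) ^ (2 * k)
        ≤ (Real.exp 1) ^ 2 / (2 * Real.pi) * ((n : ℝ) / ((k : ℝ) * ((n : ℝ) - k)))
            * c ^ (2 * k)) ∧
    ∃ N : ℕ, ∀ n : ℕ, N ≤ n → k < n →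
      (∑ ω : Fin n → Fin n → Bool,
          bprob n n (c / n) ω * ((seqCount n n k ω : ℝ) / k))
        ≤ Real.exp 1 / (2 * Real.pi) * c ^ (2 * k) := by
  have hk0 : (0 : ℝ) < k := by positivity
  have hc : 0 ≤ c ^ (2 * k) := (even_two_mul k).pow_nonneg c
  have expectation (n : ℕ) : ∑ ω : Fin n → Fin n → Bool,
      bprob n n (c / n) ω * ((seqCount n n k ω : ℝ) / k)
        = (1 / (k : ℝ)) * ((n.descFactorial k : ℝ)) ^ 2 * (c / n) ^ (2 * k) := by
    simp_rw [mul_div_assoc']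
    rw [← sum_div, sum_bprob_mul_seqCount (by omega)]
    ring
  have crude (n : ℕ) : (1 / (k : ℝ)) * ((n.descFactorial k : ℝ)) ^ 2 * (c / n) ^ (2 * k)
      ≤ 1 / k * c ^ (2 * k) := by
    rw [mul_assoc]
    exact mul_le_mul_of_nonneg_left (descFactorial_sq_mul_div_pow_le n k c) (by positivity)
  refine ⟨fun n hn => ⟨expectation n, (crude n).trans ?_⟩, 0, fun n _ _ => ?_⟩
  · refine mul_le_mul_of_nonneg_right ?_ hc
    have hratio := one_div_le_div_mul_sub hk0 (by exact_mod_cast hn : (k : ℝ) < n)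
    exact hratio.trans (le_mul_of_one_le_left ((one_div_pos.2 hk0).le.trans hratio)
      one_le_exp_one_sq_div_two_pi)
  · rw [expectation]
    refine (crude n).trans (mul_le_mul_of_nonneg_right ?_ hc)
    calc 1 / (k : ℝ) ≤ 1 / 3 := one_div_le_one_div_of_le (by norm_num) (by exact_mod_cast hk)
      _ ≤ _ := one_div_three_le_exp_one_div_two_pi

/-- For `m = n`, `p = c/n` and `k ≥ 3`,
`E[C_k] = (1/k)(n!/(n−k)!)²(c/n)^{2k} ≤ (e²/(2π))·(n/(k(n−k)))·c^{2k}`, which is at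
most `(e/(2π)) c^{2k}` for all sufficiently large `n`. -/
theorem stmt14 (k : ℕ) (hk : 3 ≤ k) (c : ℝ) (hc : 0 < c) :
    (∀ n : ℕ, k < n →
      ((∑ ω : Fin n → Fin n → Bool,
          bprob n n (c / n) ω * ((seqCount n n k ω : ℝ) / k))
        = (1 / (k : ℝ)) * ((n.descFactorial k : ℝ)) ^ 2 * (c / n) ^ (2 * k)) ∧
      (1 / (k : ℝ)) * ((n.descFactorial k : ℝ)) ^ 2 * (c / n) ^ (2 * k)
        ≤ (Real.exp 1) ^ 2 / (2 * Real.pi) * ((n : ℝ) / ((k : ℝ) * ((n : ℝ) - k)))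
            * c ^ (2 * k)) ∧
    ∃ N : ℕ, ∀ n : ℕ, N ≤ n → k < n →
      (∑ ω : Fin n → Fin n → Bool,
          bprob n n (c / n) ω * ((seqCount n n k ω : ℝ) / k))
        ≤ Real.exp 1 / (2 * Real.pi) * c ^ (2 * k) :=
  stmt14_general k hk c
end
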